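/- arXiv:1709.00605 — 5 statements merged into one kernel-verified Lean document; each statement's English description precedes it below -/
import Mathlib

section
/- Let m : ℝ → ℝ, let ν, μ : ℝ → ℂ be differentiable, let η > 0, and suppose ν'(x) + m(x)ν(x) = η·μ(x) and −μ'(x) + m(x)μ(x) = η·ν(x) for all x. Let ζ ∈ ℝ and let E ∈ ℝ satisfy E² = η² + ζ². Define φ₁(x) = (E + ζ)·ν(x) and φ₂(x) = η·μ(x). Then (φ₁, φ₂) is an eigenvector of the fiber Hamiltonian ĥ_τ(ζ) with eigenvalue E: ζ·φ₁(x) + (−φ₂'(x) + m(x)φ₂(x)) = E·φ₁(x) and (φ₁'(x) + m(x)φ₁(x)) − ζ·φ₂(x) = E·φ₂(x) for all x. -/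
/-- Propagating modes of the fiber Hamiltonian `ĥ_τ(ζ) = [[ζ, 𝔞*],[𝔞, −ζ]]`:
if `𝔞ν = ημ`, `𝔞*μ = ην` and `E² = η² + ζ²`, then
`(φ₁, φ₂) = ((E+ζ)ν, ημ)` is an eigenvector with eigenvalue `E`. -/
theorem fiber_eigenvector (m : ℝ → ℝ) (ν μ : ℝ → ℂ)
    (hν : Differentiable ℝ ν) (hμ : Differentiable ℝ μ)
    (η : ℝ) (hη : 0 < η)
    (h1 : ∀ x, deriv ν x + (m x : ℂ) * ν x = (η : ℂ) * μ x)
    (h2 : ∀ x, -deriv μ x + (m x : ℂ) * μ x = (η : ℂ) * ν x)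
    (ζ E : ℝ) (hE : E ^ 2 = η ^ 2 + ζ ^ 2) :
    let φ₁ : ℝ → ℂ := fun x => ((E : ℂ) + (ζ : ℂ)) * ν x
    let φ₂ : ℝ → ℂ := fun x => (η : ℂ) * μ x
    ∀ x : ℝ,
      (ζ : ℂ) * φ₁ x + (-(deriv φ₂ x) + (m x : ℂ) * φ₂ x) = (E : ℂ) * φ₁ x ∧
      (deriv φ₁ x + (m x : ℂ) * φ₁ x) - (ζ : ℂ) * φ₂ x = (E : ℂ) * φ₂ x := by
  intro φ₁ φ₂ x
  have hd1 : deriv φ₁ x = ((E : ℂ) + (ζ : ℂ)) * deriv ν x := by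
    simp [φ₁, deriv_const_mul _ (hν x)]
  have hd2 : deriv φ₂ x = (η : ℂ) * deriv μ x := by
    simp [φ₂, deriv_const_mul _ (hμ x)]
  have hEc : (E : ℂ) ^ 2 = (η : ℂ) ^ 2 + (ζ : ℂ) ^ 2 := by
    exact_mod_cast congrArg (Complex.ofReal) hE
  have e1 := h1 x
  have e2 := h2 x
  constructor
  · have : (ζ : ℂ) * φ₁ x + (-(deriv φ₂ x) + (m x : ℂ) * φ₂ x)
        = (ζ : ℂ) * (((E : ℂ) + ζ) * ν x) + (η : ℂ) * (-deriv μ x + (m x : ℂ) * μ x) := by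
      simp only [φ₁, φ₂, hd2]; ring
    rw [this, e2]
    simp only [φ₁]
    linear_combination -ν x * hEc
  · have : (deriv φ₁ x + (m x : ℂ) * φ₁ x) - (ζ : ℂ) * φ₂ x
        = ((E : ℂ) + ζ) * (deriv ν x + (m x : ℂ) * ν x) - (ζ : ℂ) * ((η : ℂ) * μ x) := by
      simp only [φ₁, φ₂, hd1]; ring
    rw [this, e1]
    simp only [φ₂]; ring
end

section
/- Let m : ℝ → ℝ be continuous and suppose there is a constant c > 0 such that m(x) ≥ c·x for all x ≥ 1 and m(x) ≤ c·x for all x ≤ −1. Then: (i) the function ν₀(x) = exp(−∫₀ˣ m(t)dt) is everywhere positive, satisfies ν₀'(x) + m(x)ν₀(x) = 0 for all x, and is square integrable on ℝ (ν₀ ∈ L²(ℝ)); (ii) conversely, if u : ℝ → ℂ is differentiable, satisfies u'(x) = m(x)u(x) for all x (i.e. −u' + mu = 0), and u(x₀) ≠ 0 for some x₀, then u is not square integrable on ℝ. Hence 0 is an eigenvalue of 𝔞 = d/dx + m with one-dimensional L² kernel, and 0 is not an L² eigenvalue of 𝔞* = −d/dx + m. -/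
open MeasureTheory

/-- For a mass term `m` with linear growth and a sign change
(`m(x) ≥ cx` for `x ≥ 1`, `m(x) ≤ cx` for `x ≤ −1`):
(i) `ν₀(x) = exp(−∫₀ˣ m)` is positive, solves `ν₀' + mν₀ = 0` and is in `L²(ℝ)`;
(ii) any nontrivial differentiable solution of `u' = mu` (i.e. `−u' + mu = 0`)
is not square integrable. Hence `0` is an `L²` eigenvalue of `𝔞 = d/dx + m`
with one-dimensional kernel and not of `𝔞* = −d/dx + m`. -/
theorem zero_mode_of_sign_changing_mass (m : ℝ → ℝ) (hm : Continuous m)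
    (c : ℝ) (hc : 0 < c)
    (hgrow : ∀ x : ℝ, 1 ≤ x → c * x ≤ m x)
    (hgrow' : ∀ x : ℝ, x ≤ -1 → m x ≤ c * x) :
    let ν₀ : ℝ → ℝ := fun x => Real.exp (-(∫ t in (0:ℝ)..x, m t))
    ((∀ x : ℝ, 0 < ν₀ x) ∧
      (∀ x : ℝ, deriv ν₀ x + m x * ν₀ x = 0) ∧
      Integrable (fun x : ℝ => (ν₀ x) ^ 2)) ∧
    (∀ u : ℝ → ℂ, Differentiable ℝ u → (∀ x : ℝ, deriv u x = (m x : ℂ) * u x) →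
      (∃ x₀ : ℝ, u x₀ ≠ 0) → ¬ Integrable (fun x : ℝ => ‖u x‖ ^ 2)) := by
  intro ν₀
  set F : ℝ → ℝ := fun x => ∫ t in (0:ℝ)..x, m t with hFdef
  have hInt : ∀ a b : ℝ, IntervalIntegrable m volume a b := fun a b =>
    hm.intervalIntegrable a b
  have hIntc : ∀ a b : ℝ, IntervalIntegrable (fun t => c * t) volume a b := fun a b =>
    (continuous_const.mul continuous_id).intervalIntegrable a b
  have hF : ∀ x : ℝ, HasDerivAt F (m x) x := fun x =>
    intervalIntegral.integral_hasDerivAt_right (hInt 0 x)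
      hm.aestronglyMeasurable.stronglyMeasurableAtFilter hm.continuousAt
  have hFcont : Continuous F :=
    (Differentiable.continuous (fun x => (hF x).differentiableAt) : _)
  -- lower bound for F on the right
  have key1 : ∀ x : ℝ, 1 ≤ x → F 1 + c * (x ^ 2 - 1) / 2 ≤ F x := by
    intro x hx
    have hsplit : F 1 + ∫ t in (1:ℝ)..x, m t = F x :=
      intervalIntegral.integral_add_adjacent_intervals (hInt 0 1) (hInt 1 x)
    have hmono : ∫ t in (1:ℝ)..x, c * t ≤ ∫ t in (1:ℝ)..x, m t :=
      intervalIntegral.integral_mono_on hx (hIntc 1 x) (hInt 1 x)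
        (fun t ht => hgrow t ht.1)
    have hid : ∫ t in (1:ℝ)..x, c * t = c * (x ^ 2 - 1) / 2 := by
      rw [intervalIntegral.integral_const_mul, integral_id]; ring
    linarith
  -- lower bound for F on the left
  have key2 : ∀ x : ℝ, x ≤ -1 → F (-1) + c * (x ^ 2 - 1) / 2 ≤ F x := by
    intro x hx
    have hsplit : F x + ∫ t in x..(-1:ℝ), m t = F (-1) :=
      intervalIntegral.integral_add_adjacent_intervals (hInt 0 x) (hInt x (-1))
    have hmono : ∫ t in x..(-1:ℝ), m t ≤ ∫ t in x..(-1:ℝ), c * t :=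
      intervalIntegral.integral_mono_on hx (hInt x (-1)) (hIntc x (-1))
        (fun t ht => hgrow' t ht.2)
    have hid : ∫ t in x..(-1:ℝ), c * t = c * (1 - x ^ 2) / 2 := by
      rw [intervalIntegral.integral_const_mul, integral_id]; ring
    linarith
  -- global lower bound for F
  obtain ⟨z, hz, hzmin⟩ :=
    isCompact_Icc.exists_isMinOn (α := ℝ) ⟨0, by norm_num, by norm_num⟩
      (hFcont.continuousOn (s := Set.Icc (-1:ℝ) 1))
  set M : ℝ := min (min (F 1) (F (-1))) (F z) with hM
  have hglobal : ∀ x : ℝ, M + c * (x ^ 2 - 1) / 2 ≤ F x := by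
    intro x
    rcases le_or_gt 1 x with h1 | h1
    · have := key1 x h1
      have : M ≤ F 1 := le_trans (min_le_left _ _) (min_le_left _ _)
      nlinarith [key1 x h1]
    rcases le_or_gt x (-1) with h2 | h2
    · have : M ≤ F (-1) := le_trans (min_le_left _ _) (min_le_right _ _)
      nlinarith [key2 x h2]
    · have hmem : x ∈ Set.Icc (-1:ℝ) 1 := ⟨le_of_lt h2, le_of_lt h1⟩
      have hB : F z ≤ F x := hzmin hmem
      have hMB : M ≤ F z := min_le_right _ _
      have hx2 : x ^ 2 - 1 ≤ 0 := by nlinarith [hmem.1, hmem.2]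
      nlinarith
  refine ⟨⟨fun x => Real.exp_pos _, ?_, ?_⟩, ?_⟩
  · -- the ODE
    intro x
    have hd : HasDerivAt ν₀ (Real.exp (-F x) * -(m x)) x := ((hF x).neg).exp
    rw [hd.deriv]
    show Real.exp (-F x) * -(m x) + m x * Real.exp (-F x) = 0
    ring
  · -- square integrability
    have hbound : ∀ x : ℝ, (ν₀ x) ^ 2 ≤ Real.exp (c - 2 * M) * Real.exp (-c * x ^ 2) := by
      intro x
      have h1 : (ν₀ x) ^ 2 = Real.exp (-F x + -F x) := by
        rw [Real.exp_add]; ring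
      rw [h1, ← Real.exp_add]
      apply Real.exp_le_exp.2
      have := hglobal x
      nlinarith
    refine Integrable.mono' ((integrable_exp_neg_mul_sq hc).const_mul
        (Real.exp (c - 2 * M))) ?_ (ae_of_all _ fun x => ?_)
    · exact (((hFcont.neg).rexp).pow 2).aestronglyMeasurable
    · rw [Real.norm_eq_abs, abs_of_nonneg (by positivity)]
      exact hbound x
  · -- part (ii)
    rintro u hu hderiv ⟨x₀, hx₀⟩ hIntg
    set v : ℝ → ℂ := fun x => u x * ((Real.exp (-F x) : ℝ) : ℂ) with hv
    have hvderiv : ∀ x : ℝ, HasDerivAt v 0 x := by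
      intro x
      have hu1 : HasDerivAt u ((m x : ℂ) * u x) x := by
        have := (hu x).hasDerivAt
        rwa [hderiv x] at this
      have he : HasDerivAt (fun y : ℝ => ((Real.exp (-F y) : ℝ) : ℂ))
          ((Real.exp (-F x) * -(m x) : ℝ) : ℂ) x := (((hF x).neg).exp).ofReal_comp
      have := hu1.mul he
      have h0 : (m x : ℂ) * u x * ((Real.exp (-F x) : ℝ) : ℂ) +
          u x * ((Real.exp (-F x) * -(m x) : ℝ) : ℂ) = 0 := by
        push_cast; ring
      rwa [h0] at this
    have hconst : ∀ x : ℝ, v x = v x₀ := fun x =>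
      is_const_of_deriv_eq_zero (fun y => (hvderiv y).differentiableAt)
        (fun y => (hvderiv y).deriv) x x₀
    have hvne : v x₀ ≠ 0 := by
      simp only [hv]
      exact mul_ne_zero hx₀ (by exact_mod_cast Real.exp_ne_zero _)
    have hnorm : ∀ x : ℝ, ‖u x‖ = ‖v x₀‖ * Real.exp (F x) := by
      intro x
      have := hconst x
      have h2 : ‖v x₀‖ = ‖u x‖ * Real.exp (-F x) := by
        rw [← this, hv]
        simp only [norm_mul, Complex.norm_real, Real.norm_eq_abs,
          abs_of_pos (Real.exp_pos _)]
      rw [h2, mul_assoc, ← Real.exp_add]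
      simp
    set ε : ℝ := ‖v x₀‖ ^ 2 * Real.exp (2 * F 1) with hε
    have hεpos : 0 < ε := by
      have : 0 < ‖v x₀‖ := norm_pos_iff.2 hvne
      positivity
    have hlb : ∀ x ∈ Set.Ici (1:ℝ), ε ≤ ‖u x‖ ^ 2 := by
      intro x hx
      have hx1 : (1:ℝ) ≤ x := hx
      have hq : 0 ≤ c * (x ^ 2 - 1) / 2 := by nlinarith [sq_nonneg (x - 1), sq_nonneg (x + 1)]
      have hF1 : F 1 ≤ F x := by linarith [key1 x hx1]
      rw [hnorm x, mul_pow, ← Real.exp_nat_mul]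
      have : Real.exp (2 * F 1) ≤ Real.exp ((2:ℕ) * F x) := by
        apply Real.exp_le_exp.2; push_cast; linarith
      have hn : (0:ℝ) ≤ ‖v x₀‖ ^ 2 := by positivity
      calc ε = ‖v x₀‖ ^ 2 * Real.exp (2 * F 1) := rfl
        _ ≤ ‖v x₀‖ ^ 2 * Real.exp ((2:ℕ) * F x) := by
            exact mul_le_mul_of_nonneg_left this hn
    have h1 : IntegrableOn (fun x : ℝ => ‖u x‖ ^ 2) (Set.Ici 1) := hIntg.integrableOn
    have h2 : IntegrableOn (fun _ : ℝ => ε) (Set.Ici (1:ℝ)) := by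
      refine Integrable.mono' h1 aestronglyMeasurable_const ?_
      refine (ae_restrict_iff' measurableSet_Ici).2 (ae_of_all _ fun x hx => ?_)
      rw [Real.norm_eq_abs, abs_of_pos hεpos]
      exact hlb x hx
    rw [integrableOn_const_iff (C := ε)] at h2
    rcases h2 with h2 | h2
    · exact absurd h2 (by simp [hεpos.ne'])
    · rw [Real.volume_Ici] at h2
      exact absurd h2 (by simp)
end

section
/- Let m : ℝ → ℝ, let ν, μ : ℝ → ℂ be differentiable, let η > 0, and suppose ν'(x) + m(x)ν(x) = η·μ(x) and −μ'(x) + m(x)μ(x) = η·ν(x) for all x. Let E ∈ ℝ with E² < η², set κ = √(η² − E²) and θ = (E + iκ)/η ∈ ℂ. Then |θ| = 1, and the spinor ψ(x,y) = (θ·ν(x)·exp(−κy), μ(x)·exp(−κy)) is an evanescent solution of the edge Dirac equation at energy E: (1/i)∂_y ψ₁ + (−∂_x + m(x))ψ₂ = E·ψ₁ and (∂_x + m(x))ψ₁ − (1/i)∂_y ψ₂ = E·ψ₂ at every (x,y) ∈ ℝ². -/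
/-- Evanescent modes of the edge Dirac operator: for `E² < η²`, with
`κ = √(η² − E²)` and `θ = (E + iκ)/η` of modulus one, the spinor
`ψ = (θ·ν(x)e^{−κy}, μ(x)e^{−κy})` solves `h_τψ = Eψ`. -/
theorem evanescent_mode (m : ℝ → ℝ) (ν μ : ℝ → ℂ)
    (hν : Differentiable ℝ ν) (hμ : Differentiable ℝ μ)
    (η : ℝ) (hη : 0 < η)
    (h1 : ∀ x, deriv ν x + (m x : ℂ) * ν x = (η : ℂ) * μ x)
    (h2 : ∀ x, -deriv μ x + (m x : ℂ) * μ x = (η : ℂ) * ν x)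
    (E : ℝ) (hE : E ^ 2 < η ^ 2) :
    let κ : ℝ := Real.sqrt (η ^ 2 - E ^ 2)
    let θ : ℂ := ((E : ℂ) + Complex.I * (κ : ℂ)) / (η : ℂ)
    let ψ₁ : ℝ → ℝ → ℂ := fun x y => θ * ν x * Complex.exp (-(κ : ℂ) * (y : ℂ))
    let ψ₂ : ℝ → ℝ → ℂ := fun x y => μ x * Complex.exp (-(κ : ℂ) * (y : ℂ))
    ‖θ‖ = 1 ∧
    ∀ x y : ℝ,
      (1 / Complex.I) * deriv (fun y' => ψ₁ x y') y +
          (-(deriv (fun x' => ψ₂ x' y) x) + (m x : ℂ) * ψ₂ x y) = (E : ℂ) * ψ₁ x y ∧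
      (deriv (fun x' => ψ₁ x' y) x + (m x : ℂ) * ψ₁ x y) -
          (1 / Complex.I) * deriv (fun y' => ψ₂ x y') y = (E : ℂ) * ψ₂ x y := by
  intro κ θ ψ₁ ψ₂
  have hle : (0:ℝ) ≤ η ^ 2 - E ^ 2 := by linarith
  have hκsq : κ ^ 2 = η ^ 2 - E ^ 2 := Real.sq_sqrt hle
  have hκc : (κ:ℂ) ^ 2 = (η:ℂ) ^ 2 - (E:ℂ) ^ 2 := by exact_mod_cast hκsq
  have hηne : (η:ℂ) ≠ 0 := by exact_mod_cast hη.ne'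
  have habs : ‖θ‖ = 1 := by
    have h1 : ‖(E : ℂ) + Complex.I * (κ : ℂ)‖ = η := by
      rw [show (E : ℂ) + Complex.I * (κ : ℂ) = Complex.mk E κ by
        apply Complex.ext <;> simp [Complex.ext_iff]]
      rw [Complex.norm_def, Complex.normSq_mk]
      rw [show E * E + κ * κ = η ^ 2 by nlinarith]
      exact Real.sqrt_sq hη.le
    simp only [θ, norm_div, h1, Complex.norm_real, Real.norm_eq_abs, abs_of_pos hη, div_self hη.ne']
  refine ⟨habs, fun x y => ?_⟩
  set e : ℂ := Complex.exp (-(κ : ℂ) * (y : ℂ)) with he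
  have hde : HasDerivAt (fun y' : ℝ => Complex.exp (-(κ:ℂ) * (y':ℂ))) (e * (-(κ:ℂ))) y := by
    have hlin : HasDerivAt (fun y' : ℝ => -(κ:ℂ) * (y':ℂ)) (-(κ:ℂ)) y := by
      simpa using (Complex.ofRealCLM.hasDerivAt (x := y)).const_mul (-(κ:ℂ))
    simpa [he, Function.comp_def] using (Complex.hasDerivAt_exp (-(κ:ℂ) * (y:ℂ))).comp y hlin
  have dY1 : deriv (fun y' => ψ₁ x y') y = θ * ν x * (e * (-(κ:ℂ))) := by
    simpa [ψ₁, mul_assoc] using (hde.const_mul (θ * ν x)).deriv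
  have dY2 : deriv (fun y' => ψ₂ x y') y = μ x * (e * (-(κ:ℂ))) := by
    simpa [ψ₂] using (hde.const_mul (μ x)).deriv
  have dX1 : deriv (fun x' => ψ₁ x' y) x = θ * deriv ν x * e :=
    (((hν x).hasDerivAt.const_mul θ).mul_const e).deriv
  have dX2 : deriv (fun x' => ψ₂ x' y) x = deriv μ x * e :=
    ((hμ x).hasDerivAt.mul_const e).deriv
  have hI : (1:ℂ) / Complex.I = -Complex.I := by
    simp [one_div, Complex.inv_I]
  have hkey : ((E:ℂ) - Complex.I * (κ:ℂ)) * θ = (η:ℂ) := by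
    simp only [θ]
    field_simp
    linear_combination hκc - (κ:ℂ)^2 * Complex.I_sq
  have hkey2 : θ * (η:ℂ) = (E:ℂ) + Complex.I * (κ:ℂ) := by
    simp only [θ]; field_simp
  constructor
  · rw [dY1, dX2, hI]
    show -Complex.I * (θ * ν x * (e * -(κ:ℂ))) + (-(deriv μ x * e) + (m x : ℂ) * (μ x * e))
        = (E:ℂ) * (θ * ν x * e)
    linear_combination e * (h2 x) - ν x * e * hkey
  · rw [dX1, dY2, hI]
    show (θ * deriv ν x * e + (m x : ℂ) * (θ * ν x * e)) - -Complex.I * (μ x * (e * -(κ:ℂ)))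
        = (E:ℂ) * (μ x * e)
    linear_combination θ * e * (h1 x) + μ x * e * hkey2
end

section
/- Let E be a complex inner product space, θ : E → E additive and conjugate-linear with ⟪θx, θy⟫ = ⟪y, x⟫ and θ(θx) = −x for all x, y. Let H : E → E be ℂ-linear with θ∘H = H∘θ (time reversal symmetry θHθ⁻¹ = H). If ψ ∈ E is nonzero and H ψ = E₀·ψ for a real number E₀, then θψ is also nonzero, H(θψ) = E₀·(θψ), and ⟪ψ, θψ⟫ = 0. Hence every real eigenvalue of a time-reversal symmetric Hamiltonian has at least two mutually orthogonal eigenvectors (Kramers degeneracy). -/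
open scoped InnerProductSpace

/-- Kramers degeneracy: for a Hamiltonian `H` commuting with a fermionic time
reversal `θ` (anti-unitary, `θ² = −1`), every real eigenvalue has orthogonal
Kramers pairs: if `Hψ = E₀ψ` with `ψ ≠ 0`, then `θψ ≠ 0`, `H(θψ) = E₀(θψ)`,
and `⟪ψ, θψ⟫ = 0`. -/
theorem kramers_degeneracy {E : Type*} [NormedAddCommGroup E]
    [InnerProductSpace ℂ E] (θ : E → E)
    (hadd : ∀ x y : E, θ (x + y) = θ x + θ y)
    (hconj : ∀ (a : ℂ) (x : E), θ (a • x) = (starRingEnd ℂ) a • θ x)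
    (hanti : ∀ x y : E, ⟪θ x, θ y⟫_ℂ = ⟪y, x⟫_ℂ)
    (hsq : ∀ x : E, θ (θ x) = -x)
    (H : E →ₗ[ℂ] E) (hTRS : ∀ x : E, θ (H x) = H (θ x))
    (ψ : E) (hψ : ψ ≠ 0) (E₀ : ℝ) (heig : H ψ = (E₀ : ℂ) • ψ) :
    θ ψ ≠ 0 ∧ H (θ ψ) = (E₀ : ℂ) • θ ψ ∧ ⟪ψ, θ ψ⟫_ℂ = 0 := by
  have hzero : θ (0 : E) = 0 := by
    have := hadd 0 0
    simpa using this.symm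
  refine ⟨?_, ?_, ?_⟩
  · intro h
    apply hψ
    have := hsq ψ
    rw [h, hzero] at this
    simpa using this.symm
  · have := hTRS ψ
    rw [heig, hconj] at this
    simpa using this.symm
  · have h1 : ⟪θ ψ, θ (θ ψ)⟫_ℂ = ⟪θ ψ, ψ⟫_ℂ := hanti ψ (θ ψ)
    rw [hsq, inner_neg_right] at h1
    have h2 : ⟪θ ψ, ψ⟫_ℂ = 0 := by linear_combination (h1.symm) / 2
    calc ⟪ψ, θ ψ⟫_ℂ = (starRingEnd ℂ) ⟪θ ψ, ψ⟫_ℂ := (inner_conj_symm _ _).symm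
    _ = 0 := by rw [h2]; simp
end

section
/- Let γ₁₂ ≥ 0, γ ≥ 0 and define the second-order differential operator 𝓛 acting on twice continuously differentiable functions F : ℝ² → ℝ by 𝓛F(d₁,d₂) = γ₁₂[d₁d₂(∂₁₁F − 2∂₁₂F + ∂₂₂F) + (d₂ − d₁)(∂₁F − ∂₂F)] + γ[d₁²d₂·∂₁₁F + 2d₁d₂(d₂−1)·∂₁₂F + d₂(d₂−1)²·∂₂₂F + d₁(d₂−1)·∂₁F + (d₂−1)²·∂₂F] + γ[d₁(d₁−1)²·∂₁₁F + 2d₁d₂(d₁−1)·∂₁₂F + d₁d₂²·∂₂₂F + (d₁−1)²·∂₁F + d₂(d₁−1)·∂₂F]. Then for every twice continuously differentiable φ : ℝ → ℝ and F(d₁,d₂) = φ(d₁ + d₂), one has, with ρ = d₁ + d₂: 𝓛F(d₁,d₂) = γ[ρ(1−ρ)²·φ''(ρ) + (2−ρ)(1−ρ)·φ'(ρ)]. In particular the γ₁₂ term annihilates functions of d₁ + d₂. -/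
/-- Reduction of the diffusion generator `𝓛` of the 3×3 coupled-mode system to
a one-dimensional diffusion: applied to `F(d₁,d₂) = φ(d₁+d₂)`, the generator
equals `γ[ρ(1−ρ)²φ'' + (2−ρ)(1−ρ)φ']` at `ρ = d₁+d₂`; in particular the `γ₁₂`
term annihilates functions of `d₁+d₂`. -/
theorem generator_reduces_on_sum (γ₁₂ γ : ℝ) (hγ₁₂ : 0 ≤ γ₁₂) (hγ : 0 ≤ γ)
    (φ : ℝ → ℝ) (hφ : ContDiff ℝ 2 φ) :
    let F : ℝ → ℝ → ℝ := fun a b => φ (a + b)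
    let F1 : ℝ → ℝ → ℝ := fun a b => deriv (fun x => F x b) a
    let F2 : ℝ → ℝ → ℝ := fun a b => deriv (fun y => F a y) b
    let F11 : ℝ → ℝ → ℝ := fun a b => deriv (fun x => F1 x b) a
    let F22 : ℝ → ℝ → ℝ := fun a b => deriv (fun y => F2 a y) b
    let F12 : ℝ → ℝ → ℝ := fun a b => deriv (fun x => F2 x b) a
    ∀ d₁ d₂ : ℝ,
      (γ₁₂ * (d₁ * d₂ * (F11 d₁ d₂ - 2 * F12 d₁ d₂ + F22 d₁ d₂) +
          (d₂ - d₁) * (F1 d₁ d₂ - F2 d₁ d₂)) = 0) ∧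
      (γ₁₂ * (d₁ * d₂ * (F11 d₁ d₂ - 2 * F12 d₁ d₂ + F22 d₁ d₂) +
          (d₂ - d₁) * (F1 d₁ d₂ - F2 d₁ d₂)) +
        γ * (d₁ ^ 2 * d₂ * F11 d₁ d₂ + 2 * d₁ * d₂ * (d₂ - 1) * F12 d₁ d₂ +
          d₂ * (d₂ - 1) ^ 2 * F22 d₁ d₂ + d₁ * (d₂ - 1) * F1 d₁ d₂ +
          (d₂ - 1) ^ 2 * F2 d₁ d₂) +
        γ * (d₁ * (d₁ - 1) ^ 2 * F11 d₁ d₂ + 2 * d₁ * d₂ * (d₁ - 1) * F12 d₁ d₂ +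
          d₁ * d₂ ^ 2 * F22 d₁ d₂ + (d₁ - 1) ^ 2 * F1 d₁ d₂ +
          d₂ * (d₁ - 1) * F2 d₁ d₂)
      = γ * ((d₁ + d₂) * (1 - (d₁ + d₂)) ^ 2 * deriv (deriv φ) (d₁ + d₂) +
          (2 - (d₁ + d₂)) * (1 - (d₁ + d₂)) * deriv φ (d₁ + d₂))) := by
  intro F F1 F2 F11 F22 F12 d₁ d₂
  have h1 : ∀ a b : ℝ, F1 a b = deriv φ (a + b) := by
    intro a b
    simpa using deriv_comp_add_const φ b a
  have h2 : ∀ a b : ℝ, F2 a b = deriv φ (a + b) := by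
    intro a b
    simpa using deriv_comp_const_add φ a b
  have h11 : F11 d₁ d₂ = deriv (deriv φ) (d₁ + d₂) := by
    have : (fun x => F1 x d₂) = fun x => deriv φ (x + d₂) := funext fun x => h1 x d₂
    show deriv (fun x => F1 x d₂) d₁ = _
    rw [this]
    simpa using deriv_comp_add_const (deriv φ) d₂ d₁
  have h12 : F12 d₁ d₂ = deriv (deriv φ) (d₁ + d₂) := by
    have : (fun x => F2 x d₂) = fun x => deriv φ (x + d₂) := funext fun x => h2 x d₂
    show deriv (fun x => F2 x d₂) d₁ = _
    rw [this]
    simpa using deriv_comp_add_const (deriv φ) d₂ d₁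
  have h22 : F22 d₁ d₂ = deriv (deriv φ) (d₁ + d₂) := by
    have : (fun y => F2 d₁ y) = fun y => deriv φ (d₁ + y) := funext fun y => h2 d₁ y
    show deriv (fun y => F2 d₁ y) d₂ = _
    rw [this]
    simpa using deriv_comp_const_add (deriv φ) d₁ d₂
  rw [h1 d₁ d₂, h2 d₁ d₂, h11, h12, h22]
  refine ⟨by ring, by ring⟩
end
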